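/- arXiv:2012.05112 — 2 statements merged into one kernel-verified Lean document; each statement's English description precedes it below -/
import Mathlib

section
/- Let q be a prime, and let Γ = (V,E) be a complete digraph on 2q−1 vertices whose edges carry weights w(e) ∈ ℤ/qℤ. Then Γ contains a directed cycle C whose total weight (the sum of the weights of its edges) is divisible by q. -/
/-!
If some 2-cycle has weight zero we are done, so assume `w u v + w v u ≠ 0` for all `u ≠ v`.
Fix a vertex `x` and grow, two vertices `t, t'` at a time, a set of weights of paths `s ⇝ x`
with a common start `s`: the new start `y ∈ {t, t'}` is joined to `s` either directly or through
the other vertex `v`. The two options differ by `w y v + w v s - w y s`, and the two choices of `y`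
give differences summing to `w t t' + w t' t ≠ 0`, so for one of them the weight set `W` becomes
`W + {a, b}` with `a ≠ b`. By Cauchy–Davenport each pair enlarges `W` by one, so after the
`2q - 2` vertices other than `x` every residue, in particular `-w x s`, is the weight of a path
`s ⇝ x`, and the edge `x → s` closes it into a cycle of weight zero.
-/

open Finset
open scoped Pointwise

section PathWeight

variable {V M : Type*} [AddCommGroup M] (w : V → V → M)

def pathWeight {n : ℕ} (c : Fin (n + 1) → V) : M :=
  ∑ i : Fin n, w (c i.castSucc) (c i.succ)

lemma pathWeight_cons {n : ℕ} (y : V) (c : Fin (n + 1) → V) :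
    pathWeight w (Fin.cons y c : Fin (n + 2) → V) = w y (c 0) + pathWeight w c := by
  simp [pathWeight, Fin.sum_univ_succ]

lemma sum_cycle_eq_pathWeight_add {n : ℕ} (c : Fin (n + 2) → V) :
    ∑ i, w (c i) (c (i + 1)) = pathWeight w c + w (c (Fin.last _)) (c 0) := by
  rw [Fin.sum_univ_castSucc, Fin.last_add_one, pathWeight]
  congr 2 with i
  rw [Fin.coeSucc_eq_succ]

def pathWeights (U : Set V) (s x : V) : Set M :=
  {a | ∃ (n : ℕ) (c : Fin (n + 1) → V), Function.Injective c ∧ Set.range c ⊆ U ∧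
    c 0 = s ∧ c (Fin.last n) = x ∧ pathWeight w c = a}

variable {w}

lemma zero_mem_pathWeights {U : Set V} {x : V} (hx : x ∈ U) : (0 : M) ∈ pathWeights w U x x :=
  ⟨0, fun _ => x, fun i j _ => Subsingleton.elim (α := Fin 1) i j, by simpa using hx, rfl, rfl, by
    simp [pathWeight]⟩

lemma pathWeights_mono {U U' : Set V} (h : U ⊆ U') {s x : V} :
    pathWeights w U s x ⊆ pathWeights (M := M) w U' s x := by
  rintro a ⟨n, c, hc, hcU, rest⟩
  exact ⟨n, c, hc, hcU.trans h, rest⟩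

lemma add_mem_pathWeights_insert {U : Set V} {s x y : V} {a : M}
    (ha : a ∈ pathWeights w U s x) (hy : y ∉ U) :
    w y s + a ∈ pathWeights w (insert y U) y x := by
  obtain ⟨n, c, hc, hcU, rfl, rfl, rfl⟩ := ha
  refine ⟨n + 1, Fin.cons y c, Fin.cons_injective_iff.2 ⟨fun h => hy (hcU h), hc⟩, ?_, rfl,
    Fin.cons_last _ _, pathWeight_cons w y c⟩
  rw [Fin.range_cons]
  exact Set.insert_subset_insert hcU

lemma exists_cycle_of_mem_pathWeights {U : Set V} {s x : V} (hsx : s ≠ x)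
    (h : -w x s ∈ pathWeights w U s x) :
    ∃ (m : ℕ) (c : Fin (m + 2) → V), Function.Injective c ∧ ∑ i, w (c i) (c (i + 1)) = 0 := by
  obtain ⟨n, c, hc, -, rfl, rfl, hcw⟩ := h
  obtain _ | m := n
  · exact (hsx rfl).elim
  · exact ⟨m, c, hc, by rw [sum_cycle_eq_pathWeight_add, hcw, neg_add_cancel]⟩

lemma exists_detour_ne_zero {t t' : V} (s : V) (h : w t t' + w t' t ≠ 0) :
    ∃ y v, (y = t ∧ v = t' ∨ y = t' ∧ v = t) ∧ w y v + w v s ≠ w y s := by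
  by_contra! H
  apply h
  calc w t t' + w t' t = (w t t' + w t' s - w t s) + (w t' t + w t s - w t' s) := by abel
    _ = 0 := by
      simp only [H t t' (.inl ⟨rfl, rfl⟩), H t' t (.inr ⟨rfl, rfl⟩), sub_self, add_zero]

end PathWeight

section Prime

variable {V : Type*} {p : ℕ} {w : V → V → ZMod p}

lemma exists_pathWeights_card_succ (hp : p.Prime) {U : Set V} {s x t t' : V}
    (hw : w t t' + w t' t ≠ 0) (ht : t ∉ U) (ht' : t' ∉ U) (hne : t ≠ t')
    {W : Finset (ZMod p)} (hW : W.Nonempty)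
    (hWU : ↑W ⊆ pathWeights w U s x) :
    ∃ s' ∉ U, ∃ W' : Finset (ZMod p), ↑W' ⊆ pathWeights w (insert t (insert t' U)) s' x ∧
      min p (#W + 1) ≤ #W' := by
  obtain ⟨y, v, hyv, hδ⟩ := exists_detour_ne_zero s hw
  obtain ⟨hy, hv, hyv', hU⟩ : y ∉ U ∧ v ∉ U ∧ y ≠ v ∧
      insert y (insert v U) = insert t (insert t' U) := by
    rcases hyv with ⟨rfl, rfl⟩ | ⟨rfl, rfl⟩
    · exact ⟨ht, ht', hne, rfl⟩
    · exact ⟨ht', ht, hne.symm, Set.insert_comm _ _ _⟩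
  refine ⟨y, hy, W + ({w y s, w y v + w v s} : Finset (ZMod p)), ?_, ?_⟩
  · rw [← hU]
    intro z hz
    obtain ⟨a, ha, b, hb, rfl⟩ := mem_add.1 hz
    rcases mem_insert.1 hb with rfl | hb
    · rw [add_comm]
      exact pathWeights_mono (Set.insert_subset_insert (Set.subset_insert _ _))
        (add_mem_pathWeights_insert (hWU ha) hy)
    · rw [mem_singleton.1 hb, add_comm, add_assoc]
      exact add_mem_pathWeights_insert (add_mem_pathWeights_insert (hWU ha) hv)
        (by simp [hyv', hy])
  · simpa [card_pair hδ.symm] using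
      ZMod.cauchy_davenport hp hW (insert_nonempty (w y s) {w y v + w v s})

lemma exists_pathWeights_card [DecidableEq V] (hp : p.Prime)
    (hw : ∀ u v, u ≠ v → w u v + w v u ≠ 0) (x : V) :
    ∀ (k : ℕ) (U : Finset V), x ∈ U → #U = 2 * k + 1 →
      ∃ s, (0 < k → s ≠ x) ∧
        ∃ W : Finset (ZMod p), ↑W ⊆ pathWeights w ↑U s x ∧ min p (k + 1) ≤ #W
  | 0, U, hx, _ => ⟨x, by simp, {0}, by simpa using zero_mem_pathWeights hx, by simp⟩
  | k + 1, U, hx, hU => by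
    obtain ⟨t, ht, t', ht', hne⟩ := one_lt_card.1 <|
      show 1 < #(U.erase x) by rw [card_erase_of_mem hx]; omega
    obtain ⟨htx, htU⟩ := mem_erase.1 ht
    obtain ⟨ht'x, ht'U⟩ := mem_erase.1 ht'
    set U₀ := (U.erase t).erase t'
    have hx₀ : x ∈ U₀ := by simp [U₀, hx, htx.symm, ht'x.symm]
    have hU₀ : #U₀ = 2 * k + 1 := by
      rw [card_erase_of_mem (by simp [hne.symm, ht'U]), card_erase_of_mem htU]; omega
    obtain ⟨s, -, W, hW, hWcard⟩ := exists_pathWeights_card hp hw x k U₀ hx₀ hU₀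
    have hWne : W.Nonempty := card_pos.1 (by have := hp.pos; omega)
    obtain ⟨s', hs', W', hW', hW'card⟩ := exists_pathWeights_card_succ hp (hw t t' hne)
      (by simp [U₀]) (by simp [U₀]) hne hWne hW
    refine ⟨s', fun _ hs'x => hs' (hs'x ▸ hx₀), W', ?_, by omega⟩
    rwa [show (U : Set V) = insert t (insert t' ↑U₀) by
      simp [U₀, htU, ht'U, hne.symm]]

end Prime

/-- Let `q` be a prime and let `Γ` be a complete digraph on `2q - 1` vertices (so every
ordered pair of distinct vertices carries a weight `w u v ∈ ℤ/q`).  Then `Γ` contains a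
directed cycle (a cyclic sequence of at least two distinct vertices) whose total weight
is divisible by `q`. -/
theorem complete_digraph_zero_weight_cycle_prime
    (q : ℕ) (hq : q.Prime) (V : Type) [Fintype V]
    (hV : Fintype.card V = 2 * q - 1)
    (w : V → V → ZMod q) :
    ∃ (m : ℕ) (c : Fin (m + 2) → V), Function.Injective c ∧
      ∑ i : Fin (m + 2), w (c i) (c (i + 1)) = 0 := by
  by_cases h2 : ∃ u v, u ≠ v ∧ w u v + w v u = 0
  · obtain ⟨u, v, huv, h⟩ := h2
    refine ⟨0, ![u, v], ?_, by simpa [Fin.sum_univ_two] using h⟩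
    intro i j
    fin_cases i <;> fin_cases j <;> simp [huv, huv.symm]
  push Not at h2
  classical
  have := Fact.mk hq
  have hq2 := hq.two_le
  obtain ⟨x⟩ : Nonempty V := Fintype.card_pos_iff.1 (by omega)
  obtain ⟨s, hsx, W, hW, hWcard⟩ := exists_pathWeights_card hq h2 x (q - 1) univ (mem_univ x)
    (by rw [card_univ, hV]; omega)
  have hWuniv : W = univ :=
    eq_univ_of_card W (by have := card_le_univ W; rw [ZMod.card] at this ⊢; omega)
  exact exists_cycle_of_mem_pathWeights (hsx (by omega)) (hW (by simp [hWuniv]))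
end

section
/- For every integer q ≥ 2, setting g = 2·⌈2q·ln q⌉, the following holds: every graph G containing the complete graph K_g as a minor, whose edges carry weights in ℤ/qℤ, contains a cycle whose total weight (the sum of the weights of its edges) is congruent to 0 modulo q. -/
open SimpleGraph

/-- A graph `G` contains the complete graph `K_n` as a minor. -/
def HasCliqueMinor {V : Type*} (G : SimpleGraph V) (n : ℕ) : Prop :=
  ∃ B : Fin n → Set V,
    (∀ i, (B i).Nonempty) ∧
    (∀ i, (G.induce (B i)).Connected) ∧
    (∀ i j, i ≠ j → Disjoint (B i) (B j)) ∧
    (∀ i j, i ≠ j → ∃ u ∈ B i, ∃ v ∈ B j, G.Adj u v)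

/-- The weight of a walk in a graph whose edges are weighted by `w` (given as a
symmetric function on ordered pairs of vertices). -/
def walkWeight {V : Type*} {G : SimpleGraph V} {q : ℕ} (w : V → V → ZMod q)
    {u v : V} (p : G.Walk u v) : ZMod q :=
  (p.darts.map fun d => w d.toProd.1 d.toProd.2).sum

/-!
A `K_{2m}` minor whose branch sets are paired as `(A_k, C_k)` models the complete digraph on `m`
vertices: the arc `k → l` is a walk from `A_k` through `C_k` into `A_l`, and the arcs of a directed
cycle, even one of length two, are internally disjoint, so they close up to a cycle of `G`. It
therefore suffices to find a zero-sum directed cycle in any weighting of the complete digraph on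
`m ≥ 4q - 5` vertices by `ℤ/q`; and `2 q ln q > 4q - 6`.

For this, grow from a vertex `s` a path end `e` and a set `S` of sums of paths from `s` to `e`,
using at most `2|S| - 1` vertices. As long as a detour `e → u → v` through fresh vertices moves
some sum out of `S`, extending the paths by `v` or by `u, v` enlarges `S`. Once `S` is the whole
group, the path of sum `-γ(e, s)` closes up to a zero-sum cycle. Otherwise all detour weights
`γ(e, u) + γ(u, v) - γ(e, v)` lie in the stabilizer of `S`, a proper subgroup; they differ from
`γ` by a coboundary, hence have the same cycle sums, and induction on the subgroup applies.
-/

open Pointwise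

section Digraph

variable {V A : Type*} [AddCommGroup A]

def pathSum (γ : V → V → A) : List V → A
  | x :: y :: l => γ x y + pathSum γ (y :: l)
  | _ => 0

def cycleSum (γ : V → V → A) : List V → A
  | [] => 0
  | x :: l => pathSum γ (x :: l ++ [x])

theorem pathSum_append_singleton (γ : V → V → A) : ∀ (l : List V) (hl : l ≠ []) (y : V),
    pathSum γ (l ++ [y]) = pathSum γ l + γ (l.getLast hl) y
  | [x], _, y => by simp [pathSum]
  | x :: z :: l, _, y => by
    simp only [List.cons_append, pathSum, List.getLast_cons_cons]
    rw [← List.cons_append, pathSum_append_singleton γ (z :: l) (List.cons_ne_nil _ _), add_assoc]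

theorem pathSum_coboundary (γ : V → V → A) (φ : V → A) :
    ∀ (l : List V) (hl : l ≠ []),
      pathSum (fun u v => φ u + γ u v - φ v) l = φ (l.head hl) + pathSum γ l - φ (l.getLast hl)
  | [x], _ => by simp [pathSum]
  | x :: y :: l, _ => by
    simp only [pathSum, List.head_cons, List.getLast_cons_cons]
    rw [pathSum_coboundary γ φ (y :: l) (List.cons_ne_nil _ _), List.head_cons]
    abel

theorem cycleSum_coboundary (γ : V → V → A) (φ : V → A) (l : List V) :
    cycleSum (fun u v => φ u + γ u v - φ v) l = cycleSum γ l := by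
  cases l with
  | nil => rfl
  | cons x l =>
    rw [cycleSum, cycleSum, pathSum_coboundary γ φ _ (by simp)]
    simp

theorem cycleSum_eq_pathSum_add (γ : V → V → A) {l : List V} (hl : l ≠ []) :
    cycleSum γ l = pathSum γ l + γ (l.getLast hl) (l.head hl) := by
  cases l with
  | nil => exact absurd rfl hl
  | cons x l => exact pathSum_append_singleton γ (x :: l) hl x

def HasZeroCycle (γ : V → V → A) (T : Finset V) : Prop :=
  ∃ l : List V, l.Nodup ∧ (∀ v ∈ l, v ∈ T) ∧ 2 ≤ l.length ∧ cycleSum γ l = 0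

theorem HasZeroCycle.mono {γ : V → V → A} {T T' : Finset V} (h : HasZeroCycle γ T)
    (hT : T ⊆ T') : HasZeroCycle γ T' :=
  let ⟨l, hnd, hmem, hlen, hsum⟩ := h
  ⟨l, hnd, fun v hv => hT (hmem v hv), hlen, hsum⟩

theorem HasZeroCycle.of_coboundary {γ : V → V → A} {T : Finset V} (φ : V → A)
    (h : HasZeroCycle (fun u v => φ u + γ u v - φ v) T) : HasZeroCycle γ T :=
  let ⟨l, hnd, hmem, hlen, hsum⟩ := h
  ⟨l, hnd, hmem, hlen, cycleSum_coboundary γ φ l ▸ hsum⟩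

def IsPathSum (γ : V → V → A) (U : Finset V) (s e : V) (a : A) : Prop :=
  ∃ p : List V, p.head? = some s ∧ p.getLast? = some e ∧ p.Nodup ∧ (∀ v ∈ p, v ∈ U) ∧
    pathSum γ p = a

theorem isPathSum_self (γ : V → V → A) {U : Finset V} {s : V} (hs : s ∈ U) :
    IsPathSum γ U s s 0 :=
  ⟨[s], rfl, rfl, List.nodup_singleton s, by simpa using hs, rfl⟩

namespace IsPathSum

variable {γ : V → V → A} {U U' : Finset V} {s e : V} {a : A}

theorem mono (h : IsPathSum γ U s e a) (hU : U ⊆ U') : IsPathSum γ U' s e a :=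
  let ⟨p, hs, he, hnd, hmem, hsum⟩ := h
  ⟨p, hs, he, hnd, fun v hv => hU (hmem v hv), hsum⟩

theorem start_mem (h : IsPathSum γ U s e a) : s ∈ U :=
  let ⟨_, hs, _, _, hmem, _⟩ := h
  hmem s (List.mem_of_head? hs)

theorem end_mem (h : IsPathSum γ U s e a) : e ∈ U :=
  let ⟨_, _, he, _, hmem, _⟩ := h
  hmem e (List.mem_of_getLast? he)

theorem snoc [DecidableEq V] (h : IsPathSum γ U s e a) {v : V} (hv : v ∉ U) :
    IsPathSum γ (insert v U) s v (a + γ e v) := by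
  obtain ⟨p, hs, he, hnd, hmem, hsum⟩ := h
  have hp : p ≠ [] := by rintro rfl; simp at hs
  refine ⟨p ++ [v], ?_, by simp, ?_, ?_, ?_⟩
  · rwa [List.head?_append_of_ne_nil _ hp]
  · refine List.nodup_append.mpr ⟨hnd, List.nodup_singleton v, ?_⟩
    rintro x hx y hy rfl
    exact hv (List.mem_singleton.mp hy ▸ hmem x hx)
  · rintro x hx
    rcases List.mem_append.mp hx with hx | hx
    · exact Finset.mem_insert_of_mem (hmem x hx)
    · rw [List.mem_singleton.mp hx]; exact Finset.mem_insert_self v U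
  · rw [pathSum_append_singleton γ p hp, hsum, List.getLast_of_mem_getLast? he]

theorem hasZeroCycle (h : IsPathSum γ U s e (-γ e s)) (hes : e ≠ s) {T : Finset V}
    (hU : U ⊆ T) : HasZeroCycle γ T := by
  obtain ⟨p, hs, he, hnd, hmem, hsum⟩ := h
  have hp : p ≠ [] := by rintro rfl; simp at hs
  refine ⟨p, hnd, fun v hv => hU (hmem v hv), ?_, ?_⟩
  · match p, hs, he with
    | [_], hs, he => simp_all
    | _ :: _ :: _, _, _ => simp
  · rw [cycleSum_eq_pathSum_add γ hp, hsum, List.getLast_of_mem_getLast? he,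
      (List.head_eq_iff_head?_eq_some hp).mpr hs, neg_add_cancel]

end IsPathSum

theorem forall_isPathSum_image_add_union [DecidableEq V] [DecidableEq A] {γ : V → V → A}
    {U : Finset V} {S : Finset A} {s e : V} (hS : ∀ a ∈ S, IsPathSum γ U s e a) {u v : V}
    (hu : u ∉ U) (hv : v ∉ U) (huv : u ≠ v) :
    ∀ b ∈ S.image (· + γ e v) ∪ S.image (· + (γ e u + γ u v)),
      IsPathSum γ (insert v (insert u U)) s v b := by
  simp only [Finset.mem_union, Finset.mem_image]
  rintro _ (⟨a, ha, rfl⟩ | ⟨a, ha, rfl⟩)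
  · exact ((hS a ha).snoc hv).mono (Finset.insert_subset_insert v (Finset.subset_insert u U))
  · rw [← add_assoc]
    exact ((hS a ha).snoc hu).snoc (by simp [huv.symm, hv])

end Digraph

section Translation

variable {A : Type*} [AddCommGroup A]

theorem AddSubgroup.two_mul_card_le_of_lt [Finite A] {H' H : AddSubgroup A} (h : H' < H) :
    2 * Nat.card H' ≤ Nat.card H := by
  obtain ⟨k, hk⟩ := AddSubgroup.card_dvd_of_le h.le
  have hk2 : 2 ≤ k := by
    rcases k with _ | _ | k
    · exact absurd hk (by simp [Nat.card_pos.ne'])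
    · exact absurd (AddSubgroup.eq_of_le_of_card_ge h.le (by simp [hk])) h.ne
    · omega
  rw [hk, mul_comm]
  exact Nat.mul_le_mul_left _ hk2

theorem AddSubgroup.mem_of_subset_of_card_le [Finite A] {H : AddSubgroup A} {S : Finset A}
    (hSH : ∀ a ∈ S, a ∈ H) (hcard : Nat.card H ≤ S.card) {g : A} (hg : g ∈ H) : g ∈ S := by
  have : (S : Set A) = H := Set.eq_of_subset_of_ncard_le hSH
    (by rwa [← Nat.card_coe_set_eq, Set.ncard_coe_finset]) (Set.toFinite _)
  rw [← Finset.mem_coe, this]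
  exact hg

variable [DecidableEq A]

theorem Finset.card_lt_card_image_add_union_image_add {S : Finset A} {x y a : A} (ha : a ∈ S)
    (h : a + (y - x) ∉ S) : S.card < (S.image (· + x) ∪ S.image (· + y)).card := by
  have hnew : a + y ∉ S.image (· + x) := by
    intro hmem
    obtain ⟨b, hb, hbx⟩ := Finset.mem_image.mp hmem
    exact h (by rwa [← add_sub_assoc, ← hbx, add_sub_cancel_right])
  calc S.card = (S.image (· + x)).card := (S.card_image_of_injective (add_left_injective x)).symm
    _ < _ := Finset.card_lt_card <| (Finset.ssubset_iff_of_subset Finset.subset_union_left).mpr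
        ⟨a + y, Finset.mem_union_right _ (Finset.mem_image_of_mem (· + y) ha), hnew⟩

theorem Finset.mem_stabilizer_of_forall_add_mem {S : Finset A} {g : A} (h : ∀ a ∈ S, a + g ∈ S) :
    g ∈ AddAction.stabilizer A S := by
  refine AddAction.mem_stabilizer_iff.mpr (Finset.eq_of_subset_of_card_le ?_ ?_)
  · intro b hb
    obtain ⟨a, ha, rfl⟩ := Finset.mem_vadd_finset.mp hb
    simpa [add_comm] using h a ha
  · rw [Finset.card_vadd_finset]

theorem AddSubgroup.inf_stabilizer_lt [Finite A] {H : AddSubgroup A} {S : Finset A}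
    (hS : S.Nonempty) (hcard : S.card < Nat.card H) : H ⊓ AddAction.stabilizer A S < H := by
  refine inf_le_left.lt_of_ne fun hH => hcard.not_ge ?_
  obtain ⟨a, ha⟩ := hS
  have hmem : ∀ g : H, (g : A) + a ∈ S := fun g => by
    rw [← AddAction.mem_stabilizer_iff.mp (inf_eq_left.mp hH g.2)]
    exact Finset.vadd_mem_vadd_finset ha
  calc Nat.card H ≤ Nat.card S :=
        Nat.card_le_card_of_injective (fun g => ⟨_, hmem g⟩) fun g g' h => by
          simpa using congrArg Subtype.val h
    _ = S.card := Nat.card_eq_finsetCard S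

end Translation

def ForcesZeroCycle (V : Type*) {A : Type*} [AddCommGroup A] (H : AddSubgroup A) : Prop :=
  ∀ (γ : V → V → A) (T : Finset V), (∀ u ∈ T, ∀ v ∈ T, u ≠ v → γ u v ∈ H) →
    max 2 (4 * Nat.card H - 5) ≤ T.card → HasZeroCycle γ T

section Search

variable {V A : Type*} [AddCommGroup A] [Finite A] [DecidableEq V] [DecidableEq A]
  {H : AddSubgroup A} {γ : V → V → A} {T U : Finset V} {S : Finset A} {s e : V}

theorem hasZeroCycle_of_forall_add_mem
    (ih : ∀ H' < H, ForcesZeroCycle V H')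
    (hγ : ∀ u ∈ T, ∀ v ∈ T, u ≠ v → γ u v ∈ H) (hT : 4 * Nat.card H - 5 ≤ T.card)
    (hUT : U ⊆ T) (he : e ∈ U) (hSne : S.Nonempty) (hSlt : S.card < Nat.card H)
    (hUS : U.card < 2 * S.card)
    (hstab : ∀ u ∈ T \ U, ∀ v ∈ T \ U, u ≠ v → ∀ a ∈ S, a + (γ e u + γ u v - γ e v) ∈ S) :
    HasZeroCycle γ T := by
  have hlt := AddSubgroup.inf_stabilizer_lt hSne hSlt
  have hδ : ∀ u ∈ T \ U, ∀ v ∈ T \ U, u ≠ v →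
      γ e u + γ u v - γ e v ∈ H ⊓ AddAction.stabilizer A S := by
    intro u hu v hv huv
    have hne : ∀ x ∈ T \ U, e ≠ x := fun x hx hex => (Finset.mem_sdiff.mp hx).2 (hex ▸ he)
    have hu' := (Finset.mem_sdiff.mp hu).1
    have hv' := (Finset.mem_sdiff.mp hv).1
    refine AddSubgroup.mem_inf.mpr
      ⟨?_, Finset.mem_stabilizer_of_forall_add_mem (hstab u hu v hv huv)⟩
    exact sub_mem (add_mem (hγ e (hUT he) u hu' (hne u hu)) (hγ u hu' v hv' huv))
      (hγ e (hUT he) v hv' (hne v hv))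
  -- `|T \ U| ≥ (4|H| - 5) - (2|H| - 3) = 2|H| - 2 ≥ 4|H'| - 2`
  have hcard : max 2 (4 * Nat.card (H ⊓ AddAction.stabilizer A S :) - 5) ≤ (T \ U).card := by
    have := AddSubgroup.two_mul_card_le_of_lt hlt
    have := Finset.card_sdiff_of_subset hUT
    have := Finset.card_le_card hUT
    have := hSne.card_pos
    have : 0 < Nat.card (H ⊓ AddAction.stabilizer A S :) := Nat.card_pos
    omega
  -- the detour weights are `γ` twisted by the coboundary of `γ e`
  exact ((ih _ hlt _ _ hδ hcard).of_coboundary (γ e)).mono Finset.sdiff_subset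

theorem hasZeroCycle_of_isPathSum
    (ih : ∀ H' < H, ForcesZeroCycle V H')
    (hγ : ∀ u ∈ T, ∀ v ∈ T, u ≠ v → γ u v ∈ H) (hT : 4 * Nat.card H - 5 ≤ T.card)
    (hUT : U ⊆ T) (hSne : S.Nonempty) (hSH : ∀ a ∈ S, a ∈ H)
    (hS : ∀ a ∈ S, IsPathSum γ U s e a) (hUS : U.card < 2 * S.card)
    (hes : e = s → S.card < Nat.card H) :
    HasZeroCycle γ T := by
  induction hn : Nat.card H - S.card using Nat.strong_induction_on generalizing e U S with
  | _ n ihn =>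
  obtain ⟨a₀, ha₀⟩ := hSne
  have he : e ∈ U := (hS a₀ ha₀).end_mem
  have hs : s ∈ U := (hS a₀ ha₀).start_mem
  by_cases hfull : Nat.card H ≤ S.card
  · have hes' : e ≠ s := fun h => (hes h).not_ge hfull
    have hclose := AddSubgroup.mem_of_subset_of_card_le hSH hfull
      (neg_mem (hγ e (hUT he) s (hUT hs) hes'))
    exact (hS _ hclose).hasZeroCycle hes' hUT
  by_cases hgrow : ∃ u ∈ T \ U, ∃ v ∈ T \ U, u ≠ v ∧ ∃ a ∈ S, a + (γ e u + γ u v - γ e v) ∉ S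
  · obtain ⟨u, hu, v, hv, huv, a, ha, hnew⟩ := hgrow
    obtain ⟨huT, huU⟩ := Finset.mem_sdiff.mp hu
    obtain ⟨hvT, hvU⟩ := Finset.mem_sdiff.mp hv
    have hev : e ≠ v := fun h => hvU (h ▸ he)
    have heu : e ≠ u := fun h => huU (h ▸ he)
    have hgrowth :=
      Finset.card_lt_card_image_add_union_image_add (x := γ e v) (y := γ e u + γ u v) ha hnew
    refine ihn _ (by omega) (U := insert v (insert u U)) (e := v)
      (S := S.image (· + γ e v) ∪ S.image (· + (γ e u + γ u v))) ?_ ⟨_, Finset.mem_union_left _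
      (Finset.mem_image_of_mem _ ha)⟩ ?_ ?_ ?_ (fun h => absurd (h ▸ hs) hvU) rfl
    · simp [Finset.insert_subset_iff, huT, hvT, hUT]
    · simp only [Finset.mem_union, Finset.mem_image]
      rintro _ (⟨b, hb, rfl⟩ | ⟨b, hb, rfl⟩)
      · exact add_mem (hSH b hb) (hγ e (hUT he) v hvT hev)
      · exact add_mem (hSH b hb) (add_mem (hγ e (hUT he) u huT heu) (hγ u huT v hvT huv))
    · exact forall_isPathSum_image_add_union hS huU hvU huv
    · have := Finset.card_insert_le v (insert u U)
      have := Finset.card_insert_le u U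
      omega
  · push Not at hgrow
    exact hasZeroCycle_of_forall_add_mem ih hγ hT hUT he ⟨a₀, ha₀⟩ (not_le.mp hfull) hUS hgrow

end Search

theorem forcesZeroCycle (V : Type*) {A : Type*} [AddCommGroup A] [Finite A]
    (H : AddSubgroup A) : ForcesZeroCycle V H := by
  classical
  induction H using WellFoundedLT.induction with
  | _ H ih =>
  intro γ T hγ hT
  obtain ⟨x, hx, y, hy, hxy⟩ :=
    Finset.one_lt_card.mp (lt_of_lt_of_le one_lt_two (le_of_max_le_left hT))
  by_cases hH : Nat.card H = 1
  · rw [AddSubgroup.card_eq_one] at hH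
    subst hH
    refine ⟨[x, y], by simpa using hxy, by simp [hx, hy], le_rfl, ?_⟩
    simp [cycleSum, pathSum, (AddSubgroup.mem_bot.mp (hγ x hx y hy hxy)),
      (AddSubgroup.mem_bot.mp (hγ y hy x hx hxy.symm))]
  · exact hasZeroCycle_of_isPathSum ih hγ (le_of_max_le_right hT)
      (Finset.singleton_subset_iff.mpr hx) (Finset.singleton_nonempty 0) (by simp)
      (by simpa using isPathSum_self γ (Finset.mem_singleton_self x)) (by simp)
      (fun _ => by have := Nat.card_pos (α := H); simp; omega)

theorem hasZeroCycle_of_card_le {V A : Type*} [AddCommGroup A] [Finite A] (γ : V → V → A)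
    (T : Finset V) (hT : max 2 (4 * Nat.card A - 5) ≤ T.card) : HasZeroCycle γ T :=
  forcesZeroCycle V ⊤ γ T (fun _ _ _ _ _ => AddSubgroup.mem_top _)
    (by rwa [AddSubgroup.card_top])

section Walks

variable {V K : Type*} {G : SimpleGraph V}

theorem walkWeight_append {q : ℕ} (w : V → V → ZMod q) {u v x : V} (p : G.Walk u v)
    (p' : G.Walk v x) : walkWeight w (p.append p') = walkWeight w p + walkWeight w p' := by
  simp [walkWeight, Walk.darts_append]

theorem SimpleGraph.Walk.isCycle_of_nodup_tail_support {u : V} (p : G.Walk u u)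
    (hp : p.support.tail.Nodup) (h3 : 3 ≤ p.length) : p.IsCycle := by
  have hnil : ¬p.Nil := fun h => by simp [Walk.length_eq_zero_iff.mpr h] at h3
  refine Walk.isCycle_iff_isPath_tail_and_le_length.mpr ⟨?_, h3⟩
  rwa [Walk.isPath_def, Walk.support_tail_of_not_nil p hnil]

theorem SimpleGraph.exists_isPath_of_connected_induce {s : Set V} (hs : (G.induce s).Connected)
    {x y : V} (hx : x ∈ s) (hy : y ∈ s) : ∃ p : G.Walk x y, p.IsPath ∧ ∀ v ∈ p.support, v ∈ s := by
  classical
  obtain ⟨p⟩ := hs.preconnected ⟨x, hx⟩ ⟨y, hy⟩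
  let f : G.induce s →g G := (Embedding.induce s).toHom
  have hf : Function.Injective f := Subtype.val_injective
  refine ⟨p.toPath.1.map f, p.toPath.2.map hf, fun v hv => ?_⟩
  obtain ⟨z, -, rfl⟩ := List.mem_map.mp ((Walk.support_map f p.toPath.1) ▸ hv)
  exact z.2

/-- Arcs with distinct tails and distinct heads are internally disjoint, so the arcs of a
directed cycle through distinct vertices of `K` form a cycle of `G`. -/
structure CompleteDigraphModel (G : SimpleGraph V) (K : Type*) where
  hub : K → V
  arc : ∀ k l, G.Walk (hub k) (hub l)
  region : K → K → Set V
  disjoint_region : ∀ {k l k' l'}, k ≠ k' → l ≠ l' → Disjoint (region k l) (region k' l')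
  two_le_length_arc : ∀ k l, 2 ≤ (arc k l).length
  nodup_tail_support_arc : ∀ k l, (arc k l).support.tail.Nodup
  mem_region : ∀ k l, ∀ v ∈ (arc k l).support.tail, v ∈ region k l

namespace CompleteDigraphModel

variable (M : CompleteDigraphModel G K)

def walkThrough (k : K) : List K → (z : K) → G.Walk (M.hub k) (M.hub z)
  | [], z => M.arc k z
  | l :: ks, z => (M.arc k l).append (walkThrough l ks z)

theorem walkWeight_walkThrough {q : ℕ} (w : V → V → ZMod q) : ∀ (k : K) (ks : List K) (z : K),
    walkWeight w (M.walkThrough k ks z) =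
      pathSum (fun k l => walkWeight w (M.arc k l)) (k :: ks ++ [z])
  | k, [], z => by simp [walkThrough, pathSum]
  | k, l :: ks, z => by
    rw [walkThrough, walkWeight_append, walkWeight_walkThrough w l ks z]; rfl

theorem two_le_length_walkThrough (k : K) (ks : List K) (z : K) :
    2 ≤ (M.walkThrough k ks z).length := by
  cases ks with
  | nil => exact M.two_le_length_arc k z
  | cons l ks =>
    rw [walkThrough, Walk.length_append]
    exact (M.two_le_length_arc k l).trans (Nat.le_add_right _ _)

theorem mem_tail_support_walkThrough : ∀ (k : K) (ks : List K) (z : K),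
    ∀ v ∈ (M.walkThrough k ks z).support.tail, ∃ k' ∈ k :: ks, ∃ l' ∈ ks ++ [z], v ∈ M.region k' l'
  | k, [], z, v, hv => ⟨k, by simp, z, by simp, M.mem_region k z v hv⟩
  | k, l :: ks, z, v, hv => by
    rw [walkThrough, Walk.tail_support_append, List.mem_append] at hv
    rcases hv with hv | hv
    · exact ⟨k, by simp, l, by simp, M.mem_region k l v hv⟩
    · obtain ⟨k', hk', l', hl', hv⟩ := mem_tail_support_walkThrough l ks z v hv
      exact ⟨k', .tail _ hk', l', .tail _ hl', hv⟩

theorem nodup_tail_support_walkThrough : ∀ (k : K) (ks : List K) (z : K), (k :: ks).Nodup →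
    (ks ++ [z]).Nodup → (M.walkThrough k ks z).support.tail.Nodup
  | k, [], z, _, _ => M.nodup_tail_support_arc k z
  | k, l :: ks, z, hk, hz => by
    rw [walkThrough, Walk.tail_support_append, List.nodup_append]
    refine ⟨M.nodup_tail_support_arc k l,
      nodup_tail_support_walkThrough l ks z hk.of_cons hz.of_cons, ?_⟩
    rintro v hv _ hv' rfl
    obtain ⟨k', hk', l', hl', hv'⟩ := M.mem_tail_support_walkThrough l ks z v hv'
    have hkk' : k ≠ k' := fun h => (List.nodup_cons.mp hk).1 (h ▸ hk')
    have hll' : l ≠ l' := fun h => (List.nodup_cons.mp hz).1 (h ▸ hl')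
    exact Set.disjoint_left.mp (M.disjoint_region hkk' hll') (M.mem_region k l v hv) hv'

def cycle (k : K) (ks : List K) : G.Walk (M.hub k) (M.hub k) :=
  M.walkThrough k ks k

theorem walkWeight_cycle {q : ℕ} (w : V → V → ZMod q) (k : K) (ks : List K) :
    walkWeight w (M.cycle k ks) = cycleSum (fun k l => walkWeight w (M.arc k l)) (k :: ks) :=
  M.walkWeight_walkThrough w k ks k

theorem isCycle_cycle {k : K} {ks : List K} (hks : ks ≠ []) (hnd : (k :: ks).Nodup) :
    (M.cycle k ks).IsCycle := by
  refine Walk.isCycle_of_nodup_tail_support _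
    (M.nodup_tail_support_walkThrough k ks k hnd (List.nodup_append_comm.mp hnd)) ?_
  obtain ⟨l, ks, rfl⟩ := List.exists_cons_of_ne_nil hks
  have := M.two_le_length_arc k l
  have := M.two_le_length_walkThrough l ks k
  rw [cycle, walkThrough, Walk.length_append]
  omega

end CompleteDigraphModel

theorem HasCliqueMinor.nonempty_completeDigraphModel {m : ℕ} (h : HasCliqueMinor G (2 * m)) :
    Nonempty (CompleteDigraphModel G (Fin m)) := by
  obtain ⟨B, -, hconn, hdisj, hadj⟩ := h
  let ι : Fin m ⊕ Fin m ≃ Fin (2 * m) := finSumFinEquiv.trans (finCongr (two_mul m).symm)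
  have hι : ∀ {i j}, i ≠ j → ι i ≠ ι j := fun h => ι.injective.ne h
  have hB : ∀ {i j}, i ≠ j → Disjoint (B (ι i)) (B (ι j)) := fun h => hdisj _ _ (hι h)
  choose a ha c hc hac using fun k => hadj (ι (.inl k)) (ι (.inr k)) (hι Sum.inl_ne_inr)
  choose x hx y hy hxy using fun k l => hadj (ι (.inr k)) (ι (.inl l)) (hι Sum.inr_ne_inl)
  choose P hP hPB using fun k l =>
    exists_isPath_of_connected_induce (hconn (ι (.inr k))) (hc k) (hx k l)
  choose Q hQ hQB using fun k l =>
    exists_isPath_of_connected_induce (hconn (ι (.inl l))) (hy k l) (ha l)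
  let arc k l : G.Walk (a k) (a l) := .cons (hac k) ((P k l).append (.cons (hxy k l) (Q k l)))
  have htail : ∀ k l, (arc k l).support.tail = (P k l).support ++ (Q k l).support := by
    simp [arc, Walk.support_append]
  refine ⟨{
    hub := a
    arc := arc
    region := fun k l => B (ι (.inr k)) ∪ B (ι (.inl l))
    disjoint_region := fun hk hl => ?_
    two_le_length_arc := fun k l => by simp [arc]; omega
    nodup_tail_support_arc := fun k l => ?_
    mem_region := fun k l v hv => ?_ }⟩
  · exact Set.disjoint_union_left.mpr
      ⟨Set.disjoint_union_right.mpr ⟨hB (by simpa), hB Sum.inr_ne_inl⟩,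
        Set.disjoint_union_right.mpr ⟨hB Sum.inl_ne_inr, hB (by simpa)⟩⟩
  · rw [htail, List.nodup_append]
    exact ⟨(hP k l).support_nodup, (hQ k l).support_nodup, fun v hv _ hv' h =>
      Set.disjoint_left.mp (hB Sum.inr_ne_inl) (hPB k l v hv) (h ▸ hQB k l _ hv')⟩
  · rw [htail, List.mem_append] at hv
    exact hv.imp (hPB k l v) (hQB k l v)

end Walks

theorem four_mul_sub_six_lt_two_mul_mul_log {x : ℝ} (hx : 0 < x) :
    4 * x - 6 < 2 * x * Real.log x := by
  have hlog3 : 1 < Real.log 3 := by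
    rw [Real.lt_log_iff_exp_lt (by norm_num)]
    linarith [Real.exp_one_lt_d9]
  have hx3 : 1 - 3 / x ≤ Real.log (x / 3) := by
    simpa using Real.one_sub_inv_le_log_of_pos (div_pos hx (by norm_num : (0 : ℝ) < 3))
  have hsplit : Real.log x = Real.log 3 + Real.log (x / 3) := by
    rw [← Real.log_mul (by norm_num) (by positivity), mul_div_cancel₀ _ (by norm_num)]
  have : 2 * x * (3 / x) = 6 := by field_simp; norm_num
  rw [hsplit]
  nlinarith

theorem max_two_four_mul_sub_five_le_ceil {q : ℕ} (hq : 2 ≤ q) :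
    max 2 (4 * q - 5) ≤ ⌈2 * (q : ℝ) * Real.log q⌉₊ := by
  have h : ((4 * q - 6 : ℕ) : ℝ) < 2 * (q : ℝ) * Real.log q := by
    rw [Nat.cast_sub (by omega)]
    push_cast
    exact four_mul_sub_six_lt_two_mul_mul_log (by positivity)
  have := Nat.lt_ceil.mpr h
  omega

theorem zero_weight_cycle_of_clique_minor_general
    (q : ℕ) (hq : 2 ≤ q) (V : Type) (G : SimpleGraph V)
    (w : V → V → ZMod q)
    (hG : HasCliqueMinor G (2 * ⌈2 * (q : ℝ) * Real.log q⌉₊)) :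
    ∃ (u : V) (c : G.Walk u u), c.IsCycle ∧ walkWeight w c = 0 := by
  have : NeZero q := ⟨by omega⟩
  obtain ⟨M⟩ := hG.nonempty_completeDigraphModel
  obtain ⟨_ | ⟨k, ks⟩, hnd, -, hlen, hsum⟩ := hasZeroCycle_of_card_le
    (fun k l => walkWeight w (M.arc k l)) Finset.univ
    (by simpa using max_two_four_mul_sub_five_le_ceil hq)
  · simp at hlen
  · have hks : ks ≠ [] := List.ne_nil_of_length_pos (by simp at hlen; omega)
    exact ⟨_, M.cycle k ks, M.isCycle_cycle hks hnd, (M.walkWeight_cycle w k ks).trans hsum⟩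

/-- For every integer `q ≥ 2`, with `g = 2 * ⌈2 q ln q⌉`, every graph containing `K_g`
as a minor, with edges weighted by elements of `ℤ/q`, contains a cycle whose total
weight is `0` modulo `q`. -/
theorem zero_weight_cycle_of_clique_minor
    (q : ℕ) (hq : 2 ≤ q) (V : Type) [Fintype V] (G : SimpleGraph V)
    (w : V → V → ZMod q) (hw : ∀ u v : V, w u v = w v u)
    (hG : HasCliqueMinor G (2 * ⌈2 * (q : ℝ) * Real.log q⌉₊)) :
    ∃ (u : V) (c : G.Walk u u), c.IsCycle ∧ walkWeight w c = 0 :=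
  zero_weight_cycle_of_clique_minor_general q hq V G w hG
end
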